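/- Let t > 0, N ≥ 1, let y = (y₁,…,y_N) ∈ ℝ^N with y₁ < y₂ < ⋯ < y_N, and let ξ = (ξ₁,…,ξ_N) ∈ ℝ^N with ξ₁ < ξ₂ < ⋯ < ξ_N. Then the limit as ε → 0⁺ of (h_N(y)/h_N(εξ)) · det_{1 ≤ j,k ≤ N}[p(t, y_j | ε ξ_k)] equals t^{−N²/2} · (2π)^{−N/2} · (∏_{j=1}^N (j−1)!)^{−1} · exp(−|y|²/(2t)) · (h_N(y))². (The noncolliding Brownian motion started at the origin has the eigenvalue distribution of the Gaussian unitary ensemble with variance t as its single-time distribution.) -/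

import Mathlib

open Filter Topology Finset

/-- Heat kernel: transition density of one-dimensional standard Brownian motion. -/
noncomputable def heatKernel (t y x : ℝ) : ℝ :=
  Real.exp (-(x - y) ^ 2 / (2 * t)) / Real.sqrt (2 * Real.pi * t)

/-- Vandermonde product `h_N(v) = ∏_{j<ℓ}(v_ℓ − v_j)`. -/
def vdm {N : ℕ} (v : Fin N → ℝ) : ℝ :=
  ∏ p ∈ Finset.univ.filter (fun p : Fin N × Fin N => p.1 < p.2), (v p.2 - v p.1)

open Matrix
open scoped Nat

/-! Writing `p(t, y | x) = r(y) e^{-x²/2t} e^{(y/t) x}`, the determinant factors as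
`∏ r(y_j) ∏ e^{-(εξ_k)²/2t} · det[e^{b_j εξ_k}]` with `b = y/t`. Expanding the exponential to
order `N - 1` writes `[e^{b_j εξ_k}]` as `V(b) F⁻¹ V(εξ)ᵀ` plus an `O(ε^N)` remainder, where `V` is
the Vandermonde matrix and `F = diag(m!)`. Since `V(εξ) = V(ξ) diag(ε^m)`, dividing by
`det V(εξ) = h_N(εξ)` leaves `det(V(b) F⁻¹ + C(ε))` with `C(ε) = O(ε)`, which tends to
`h_N(b) / ∏ m!`; finally `h_N(y/t) = t^{-N(N-1)/2} h_N(y)`. -/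

theorem vdm_eq_det_vandermonde {N : ℕ} (v : Fin N → ℝ) : vdm v = (vandermonde v).det := by
  rw [det_vandermonde, vdm, Finset.prod_sigma']
  refine Finset.prod_nbij' (fun p => ⟨p.1, p.2⟩) (fun x => (x.1, x.2)) ?_ ?_ ?_ ?_ ?_ <;>
    simp [Finset.mem_sigma, Finset.mem_Ioi]

theorem vandermonde_const_mul {R : Type*} [CommRing R] {n : ℕ} (s : R) (v : Fin n → R) :
    vandermonde (fun i => s * v i) = vandermonde v * diagonal (fun m : Fin n => s ^ (m : ℕ)) := by
  ext i m
  simp [vandermonde_apply, mul_pow, mul_comm]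

theorem vdm_const_mul {N : ℕ} (s : ℝ) (v : Fin N → ℝ) :
    vdm (fun i => s * v i) = (∏ m : Fin N, s ^ (m : ℕ)) * vdm v := by
  rw [vdm_eq_det_vandermonde, vdm_eq_det_vandermonde, vandermonde_const_mul, det_mul,
    det_diagonal, mul_comm]

noncomputable def expTaylorRemainder (n : ℕ) (x : ℝ) : ℝ :=
  Real.exp x - ∑ i ∈ range n, x ^ i / i !

theorem tendsto_expTaylorRemainder_mul_div_pow {m n : ℕ} (h : m < n) (x : ℝ) :
    Tendsto (fun ε => expTaylorRemainder n (x * ε) / ε ^ m) (𝓝 0) (𝓝 0) := by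
  have hx : Tendsto (fun ε : ℝ => x * ε) (𝓝 0) (𝓝 0) := by
    simpa using (continuous_const_mul x).tendsto 0
  have hpow : (fun ε : ℝ => (x * ε) ^ m) =O[𝓝 0] (fun ε => ε ^ m) := by
    simpa only [mul_pow] using (Asymptotics.isBigO_refl (fun ε : ℝ => ε ^ m) _).const_mul_left _
  exact ((((Real.exp_sub_sum_range_isBigO_pow n).trans_isLittleO
    (Asymptotics.isLittleO_pow_pow h)).comp_tendsto hx).trans_isBigO hpow).tendsto_div_nhds_zero

theorem exp_mul_matrix_eq_vandermonde_add {N : ℕ} (a x : Fin N → ℝ) :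
    (of fun j k => Real.exp (a j * x k)) =
      vandermonde a * diagonal (fun m : Fin N => ((m : ℕ) ! : ℝ)⁻¹) * (vandermonde x)ᵀ +
        of fun j k => expTaylorRemainder N (a j * x k) := by
  ext j k
  rw [Matrix.add_apply, of_apply, of_apply, expTaylorRemainder, mul_apply]
  simp only [mul_diagonal, transpose_apply, vandermonde_apply]
  rw [Fin.sum_univ_eq_sum_range (fun i => a j ^ i * (i ! : ℝ)⁻¹ * x k ^ i),
    sum_congr rfl fun i _ => show a j ^ i * (i ! : ℝ)⁻¹ * x k ^ i = (a j * x k) ^ i / (i ! : ℝ) by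
      ring]
  ring

theorem heatKernel_eq_mul_exp {t : ℝ} (ht : t ≠ 0) (y x : ℝ) :
    heatKernel t y x = Real.exp (-y ^ 2 / (2 * t)) / Real.sqrt (2 * Real.pi * t) *
      (Real.exp (-x ^ 2 / (2 * t)) * Real.exp (t⁻¹ * y * x)) := by
  rw [heatKernel, ← Real.exp_add, div_mul_eq_mul_div, ← Real.exp_add]
  congr 2
  field_simp
  ring

theorem prod_inv_pow_div_sqrt_pow {t : ℝ} (ht : 0 < t) (N : ℕ) :
    (∏ m : Fin N, t⁻¹ ^ (m : ℕ)) / Real.sqrt (2 * Real.pi * t) ^ N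
      = t ^ (-(N : ℝ) ^ 2 / 2) * (2 * Real.pi) ^ (-(N : ℝ) / 2) := by
  have hsum : ∑ m ∈ range N, (m : ℝ) = N * (N - 1) / 2 := by
    induction N with
    | zero => simp
    | succ n ih => rw [sum_range_succ, ih]; push_cast; ring
  have hprod : ∏ m : Fin N, t⁻¹ ^ (m : ℕ) = t ^ (-(N * (N - 1) / 2 : ℝ)) := by
    rw [prod_pow_eq_pow_sum, Fin.sum_univ_eq_sum_range (fun m => m), ← hsum, inv_pow,
      ← Real.rpow_natCast, Real.rpow_neg ht.le]
    push_cast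
    rfl
  have hsqrt : Real.sqrt (2 * Real.pi * t) ^ N
      = (2 * Real.pi) ^ ((N : ℝ) / 2) * t ^ ((N : ℝ) / 2) := by
    rw [Real.sqrt_eq_rpow, ← Real.rpow_natCast, ← Real.rpow_mul (by positivity),
      Real.mul_rpow (by positivity) ht.le]
    ring_nf
  rw [hprod, hsqrt, div_mul_eq_div_div_swap, ← Real.rpow_sub ht, div_eq_mul_inv,
    ← Real.rpow_neg (by positivity)]
  congr 2 <;> ring

theorem tendsto_det_add_mul_div_det {α K n : Type*} [Fintype n] [DecidableEq n] [Field K]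
    [TopologicalSpace K] [IsTopologicalRing K] {l : Filter α} (A : Matrix n n K)
    {B C : α → Matrix n n K} (hC : Tendsto C l (𝓝 0)) (hB : ∀ᶠ x in l, (B x).det ≠ 0) :
    Tendsto (fun x => ((A + C x) * B x).det / (B x).det) l (𝓝 A.det) := by
  refine (((continuous_id.matrix_det).tendsto A).comp
    (by simpa using tendsto_const_nhds.add hC)).congr' ?_
  filter_upwards [hB] with x hx
  rw [det_mul, mul_div_cancel_right₀ _ hx]
  rfl

theorem tendsto_det_exp_div_vdm {N : ℕ} (a c : Fin N → ℝ) (hc : vdm c ≠ 0) :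
    Tendsto (fun ε => (of fun j k => Real.exp (a j * (ε * c k))).det / vdm (fun k => ε * c k))
      (𝓝[≠] 0) (𝓝 (vdm a / ∏ m ∈ range N, (m ! : ℝ))) := by
  set A := vandermonde a * diagonal (fun m : Fin N => ((m : ℕ) ! : ℝ)⁻¹)
  set B : ℝ → Matrix (Fin N) (Fin N) ℝ := fun ε => (vandermonde (fun k => ε * c k))ᵀ
  set W := ((vandermonde c)ᵀ)⁻¹
  set C : ℝ → Matrix (Fin N) (Fin N) ℝ := fun ε =>
    (of fun j k => expTaylorRemainder N (a j * (ε * c k))) * W *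
      diagonal (fun m : Fin N => (ε ^ (m : ℕ))⁻¹)
  have hW : W * (vandermonde c)ᵀ = 1 := nonsing_inv_mul _ (by
    rw [det_transpose, ← vdm_eq_det_vandermonde]; exact hc.isUnit)
  -- `B ε = diag(ε ^ m) * Vᵀ`, so `C ε * B ε` is the Taylor remainder matrix.
  have hfactor : ∀ ε ≠ 0, (of fun j k => Real.exp (a j * (ε * c k))) = (A + C ε) * B ε := by
    intro ε hε
    rw [exp_mul_matrix_eq_vandermonde_add, add_mul]
    congr 1
    simp [C, B, vandermonde_const_mul, Matrix.mul_assoc, ← Matrix.mul_assoc (diagonal _),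
      inv_mul_cancel₀ (pow_ne_zero _ hε), hW]
  have hC : Tendsto C (𝓝[≠] 0) (𝓝 0) := by
    refine tendsto_pi_nhds.2 fun j => tendsto_pi_nhds.2 fun m => ?_
    have hCjm : ∀ ε, C ε j m = ∑ k, expTaylorRemainder N (a j * c k * ε) / ε ^ (m : ℕ) * W k m :=
      fun ε => by
        dsimp only [C]
        rw [mul_diagonal, mul_apply, sum_mul]
        exact sum_congr rfl fun k _ => by simp only [of_apply]; ring_nf
    simp only [hCjm]
    simpa using tendsto_finsetSum _ fun k _ =>
      ((tendsto_expTaylorRemainder_mul_div_pow m.isLt (a j * c k)).mono_left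
        nhdsWithin_le_nhds).mul_const (W k m)
  have hB : ∀ ε, (B ε).det = vdm (fun k => ε * c k) := fun ε => by
    rw [det_transpose, vdm_eq_det_vandermonde]
  have hA : A.det = vdm a / ∏ m ∈ range N, (m ! : ℝ) := by
    rw [det_mul, det_diagonal, ← vdm_eq_det_vandermonde,
      Fin.prod_univ_eq_prod_range (fun m => (m ! : ℝ)⁻¹), prod_inv_distrib, div_eq_mul_inv]
  have hBdet : ∀ᶠ ε in 𝓝[≠] 0, (B ε).det ≠ 0 := by
    filter_upwards [self_mem_nhdsWithin] with ε (hε : ε ≠ 0)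
    rw [hB, vdm_const_mul]
    exact mul_ne_zero (prod_ne_zero_iff.2 fun m _ => pow_ne_zero _ hε) hc
  rw [← hA]
  refine (tendsto_det_add_mul_div_det A hC hBdet).congr' ?_
  filter_upwards [self_mem_nhdsWithin] with ε (hε : ε ≠ 0)
  rw [hfactor ε hε, hB]

theorem noncolliding_bm_gue_limit_general (N : ℕ) (t : ℝ) (ht : 0 < t)
    (y ξ : Fin N → ℝ)
    (hξ : ∀ j k : Fin N, j < k → ξ j < ξ k) :
    Tendsto
      (fun ε : ℝ =>
        (vdm y / vdm (fun k => ε * ξ k)) *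
          Matrix.det (Matrix.of fun j k : Fin N => heatKernel t (y j) (ε * ξ k)))
      (𝓝[>] 0)
      (𝓝 (t ^ (-(N : ℝ) ^ 2 / 2) * (2 * Real.pi) ^ (-(N : ℝ) / 2) *
        ((∏ j ∈ Finset.range N, (Nat.factorial j : ℝ))⁻¹) *
        Real.exp (-(∑ j : Fin N, y j ^ 2) / (2 * t)) * (vdm y) ^ 2)) := by
  set r : Fin N → ℝ := fun j => Real.exp (-y j ^ 2 / (2 * t)) / Real.sqrt (2 * Real.pi * t)
  set g : ℝ → ℝ := fun ε => ∏ k, Real.exp (-(ε * ξ k) ^ 2 / (2 * t))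
  have hξ0 : vdm ξ ≠ 0 := by
    rw [vdm_eq_det_vandermonde]
    exact det_vandermonde_ne_zero_iff.2 (StrictMono.injective hξ)
  have hdet : ∀ ε, (of fun j k : Fin N => heatKernel t (y j) (ε * ξ k)).det =
      (∏ j, r j) * (g ε * (of fun j k => Real.exp (t⁻¹ * y j * (ε * ξ k))).det) := fun ε => by
    rw [← det_mul_row, ← det_mul_column]
    congr
    ext j k
    simp only [heatKernel_eq_mul_exp ht.ne', r, of_apply]
  have hg : Tendsto g (𝓝[>] 0) (𝓝 1) :=
    ((by fun_prop : Continuous g).tendsto' 0 1 (by simp [g])).mono_left nhdsWithin_le_nhds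
  have hlim := (tendsto_const_nhds (x := vdm y * ∏ j, r j)).mul (hg.mul
    ((tendsto_det_exp_div_vdm (fun j => t⁻¹ * y j) ξ hξ0).mono_left (nhdsGT_le_nhdsNE 0)))
  convert hlim using 2
  · simp only [hdet]
    ring
  · rw [vdm_const_mul, prod_div_distrib, ← Real.exp_sum, ← sum_div, ← sum_neg_distrib,
      ← prod_inv_pow_div_sqrt_pow ht N, prod_const, Finset.card_univ, Fintype.card_fin]
    ring

/-- The noncolliding Brownian motion started at the origin has the GUE eigenvalue
distribution with variance `t` as its single-time distribution. -/
theorem noncolliding_bm_gue_limit (N : ℕ) (hN : 1 ≤ N) (t : ℝ) (ht : 0 < t)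
    (y ξ : Fin N → ℝ) (hy : ∀ j k : Fin N, j < k → y j < y k)
    (hξ : ∀ j k : Fin N, j < k → ξ j < ξ k) :
    Tendsto
      (fun ε : ℝ =>
        (vdm y / vdm (fun k => ε * ξ k)) *
          Matrix.det (Matrix.of fun j k : Fin N => heatKernel t (y j) (ε * ξ k)))
      (𝓝[>] 0)
      (𝓝 (t ^ (-(N : ℝ) ^ 2 / 2) * (2 * Real.pi) ^ (-(N : ℝ) / 2) *
        ((∏ j ∈ Finset.range N, (Nat.factorial j : ℝ))⁻¹) *
        Real.exp (-(∑ j : Fin N, y j ^ 2) / (2 * t)) * (vdm y) ^ 2)) :=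
  noncolliding_bm_gue_limit_general N t ht y ξ hξ
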